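/- Suppose Assumption 1 holds. Then the operator norm of conv, where both the domain ℝ^{d_in×h_in×w_in} and the codomain ℝ^{d_out×h_out×w_out} carry the Euclidean (ℓ2) norm of the vector of all entries, is at most sqrt( h_out·w_out · Σ_{i=1}^{d_out} Σ_{j=1}^{d_in} Σ_{k=1}^{k1} Σ_{t=1}^{k2} |K(i,j,k,t)|² ). -/
import Mathlib


/-!
2D multi-channel convolutional layer, 0-based reindexing of the 1-based
description in the paper.  The input is `X : Fin d_in × Fin h_in × Fin w_in → ℝ`
(a 3D tensor), the kernel is `K : Fin d_out → Fin d_in → Fin k1 → Fin k2 → ℝ`,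
strides `s1 s2`, paddings `p1 p2`,
`h_out = (h_in + 2*p1 - k1)/s1 + 1`, `w_out = (w_in + 2*p2 - k2)/s2 + 1`.
-/

noncomputable section

/-- Zero-padded input, accessed with 0-based padded coordinates `a b`
(so `a` ranges over `0, …, h_in + 2*p1 - 1`):
`padX X j a b = X (j, a - p1, b - p2)` when `p1 ≤ a < h_in + p1` and
`p2 ≤ b < w_in + p2`, and `0` otherwise. -/
def padX (d_in h_in w_in p1 p2 : ℕ)
    (X : Fin d_in × Fin h_in × Fin w_in → ℝ) (j : Fin d_in) (a b : ℕ) : ℝ :=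
  if h : p1 ≤ a ∧ a < h_in + p1 ∧ p2 ≤ b ∧ b < w_in + p2 then
    X (j, ⟨a - p1, by omega⟩, ⟨b - p2, by omega⟩)
  else 0

/-- The 2D multi-channel convolution:
`conv(X)(i,r,c) = ∑ j ∑ k ∑ t, K i j k t * X̃(j, r*s1 + k, c*s2 + t)`
(all indices 0-based). -/
def convMap (d_in d_out h_in w_in k1 k2 s1 s2 p1 p2 : ℕ)
    (K : Fin d_out → Fin d_in → Fin k1 → Fin k2 → ℝ)
    (X : Fin d_in × Fin h_in × Fin w_in → ℝ) :
    Fin d_out × Fin ((h_in + 2*p1 - k1)/s1 + 1) × Fin ((w_in + 2*p2 - k2)/s2 + 1) → ℝ :=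
  fun irc => ∑ j : Fin d_in, ∑ k : Fin k1, ∑ t : Fin k2,
    K irc.1 j k t *
      padX d_in h_in w_in p1 p2 X j (irc.2.1.val * s1 + k.val) (irc.2.2.val * s2 + t.val)

lemma padX_add (d_in h_in w_in p1 p2 : ℕ)
    (X Y : Fin d_in × Fin h_in × Fin w_in → ℝ) (j : Fin d_in) (a b : ℕ) :
    padX d_in h_in w_in p1 p2 (X + Y) j a b =
      padX d_in h_in w_in p1 p2 X j a b + padX d_in h_in w_in p1 p2 Y j a b := by
  unfold padX; split <;> simp

lemma padX_smul (d_in h_in w_in p1 p2 : ℕ) (c : ℝ)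
    (X : Fin d_in × Fin h_in × Fin w_in → ℝ) (j : Fin d_in) (a b : ℕ) :
    padX d_in h_in w_in p1 p2 (c • X) j a b = c * padX d_in h_in w_in p1 p2 X j a b := by
  unfold padX; split <;> simp

/-- `conv` as a linear map between the spaces of 3D tensors. -/
def convLinMap (d_in d_out h_in w_in k1 k2 s1 s2 p1 p2 : ℕ)
    (K : Fin d_out → Fin d_in → Fin k1 → Fin k2 → ℝ) :
    ((Fin d_in × Fin h_in × Fin w_in) → ℝ) →ₗ[ℝ]
      ((Fin d_out × Fin ((h_in + 2*p1 - k1)/s1 + 1) × Fin ((w_in + 2*p2 - k2)/s2 + 1)) → ℝ) where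
  toFun := convMap d_in d_out h_in w_in k1 k2 s1 s2 p1 p2 K
  map_add' X Y := by
    funext irc
    simp only [convMap, padX_add, mul_add, Finset.sum_add_distrib, Pi.add_apply]
  map_smul' c X := by
    funext irc
    simp only [convMap, padX_smul, RingHom.id_apply, Pi.smul_apply, smul_eq_mul,
      Finset.mul_sum]
    congr 1; funext j; congr 1; funext k; congr 1; funext t; ring

/-- `conv` as a continuous linear map between the spaces of 3D tensors,
both equipped with the Euclidean (`ℓ2`) norm of the vector of all entries. -/
def convCLM2 (d_in d_out h_in w_in k1 k2 s1 s2 p1 p2 : ℕ)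
    (K : Fin d_out → Fin d_in → Fin k1 → Fin k2 → ℝ) :
    PiLp 2 (fun _ : Fin d_in × Fin h_in × Fin w_in => ℝ) →L[ℝ]
      PiLp 2 (fun _ : Fin d_out × Fin ((h_in + 2*p1 - k1)/s1 + 1) ×
        Fin ((w_in + 2*p2 - k2)/s2 + 1) => ℝ) :=
  LinearMap.toContinuousLinearMap
    (((WithLp.linearEquiv 2 ℝ _).symm.toLinearMap.comp
        (convLinMap d_in d_out h_in w_in k1 k2 s1 s2 p1 p2 K)).comp
      (WithLp.linearEquiv 2 ℝ _).toLinearMap)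


lemma padX_total (d_in h_in w_in p1 p2 : ℕ)
    (X : Fin d_in × Fin h_in × Fin w_in → ℝ) (j : Fin d_in) :
    ∑ q ∈ Finset.range (h_in + 2*p1) ×ˢ Finset.range (w_in + 2*p2),
      padX d_in h_in w_in p1 p2 X j q.1 q.2 ^ 2 =
    ∑ q : Fin h_in × Fin w_in, X (j, q.1, q.2) ^ 2 := by
  have hsub : Finset.Ico p1 (h_in+p1) ×ˢ Finset.Ico p2 (w_in+p2) ⊆
      Finset.range (h_in + 2*p1) ×ˢ Finset.range (w_in + 2*p2) := by
    intro q hq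
    simp only [Finset.mem_product, Finset.mem_Ico, Finset.mem_range] at *
    omega
  rw [← Finset.sum_subset hsub (by
    intro q hq hq'
    simp only [Finset.mem_product, Finset.mem_Ico, Finset.mem_range] at *
    have : ¬ (p1 ≤ q.1 ∧ q.1 < h_in + p1 ∧ p2 ≤ q.2 ∧ q.2 < w_in + p2) := by omega
    simp [padX, this])]
  refine Finset.sum_bij' (i := fun q hq => ((⟨q.1 - p1, ?_⟩ : Fin h_in), (⟨q.2 - p2, ?_⟩ : Fin w_in)))
    (j := fun q _ => ((q.1 : ℕ) + p1, (q.2 : ℕ) + p2)) ?_ ?_ ?_ ?_ ?_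
  · simp only [Finset.mem_product, Finset.mem_Ico] at hq; omega
  · simp only [Finset.mem_product, Finset.mem_Ico] at hq; omega
  · intro a ha; simp
  · intro a ha
    simp only [Finset.mem_product, Finset.mem_Ico]
    exact ⟨⟨by omega, by omega⟩, by omega, by omega⟩
  · intro a ha
    simp only [Finset.mem_product, Finset.mem_Ico] at ha
    ext <;> simp <;> omega
  · intro a ha; ext <;> simp
  · intro a ha
    simp only [Finset.mem_product, Finset.mem_Ico] at ha
    have h : p1 ≤ a.1 ∧ a.1 < h_in + p1 ∧ p2 ≤ a.2 ∧ a.2 < w_in + p2 := by omega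
    simp [padX, h]

lemma window_sq_le (d_in h_in w_in k1 k2 p1 p2 : ℕ)
    (X : Fin d_in × Fin h_in × Fin w_in → ℝ) (j : Fin d_in) (r c : ℕ)
    (hr : r + k1 ≤ h_in + 2*p1) (hc : c + k2 ≤ w_in + 2*p2) :
    ∑ p : Fin k1 × Fin k2,
      padX d_in h_in w_in p1 p2 X j (r + p.1) (c + p.2) ^ 2 ≤
    ∑ q : Fin h_in × Fin w_in, X (j, q.1, q.2) ^ 2 := by
  rw [← padX_total d_in h_in w_in p1 p2 X j]
  have hinj : Function.Injective
      (fun p : Fin k1 × Fin k2 => ((r + p.1 : ℕ), (c + p.2 : ℕ))) := by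
    intro a b hab
    simp only [Prod.mk.injEq] at hab
    ext <;> omega
  refine le_trans (le_of_eq (Finset.sum_image (s := Finset.univ)
      (g := fun p : Fin k1 × Fin k2 => ((r + p.1 : ℕ), (c + p.2 : ℕ)))
      (f := fun q : ℕ × ℕ => padX d_in h_in w_in p1 p2 X j q.1 q.2 ^ 2)
      (fun a _ b _ h => hinj h)).symm) ?_
  refine Finset.sum_le_sum_of_subset_of_nonneg ?_ (fun _ _ _ => sq_nonneg _)
  intro q hq
  simp only [Finset.mem_image, Finset.mem_univ, true_and] at hq
  obtain ⟨p, rfl⟩ := hq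
  simp only [Finset.mem_product, Finset.mem_range]
  constructor <;> [skip; skip] <;> · have := p.1.is_lt; have := p.2.is_lt; omega

/-- Under Assumption 1 the `ℓ2 → ℓ2` operator norm of `conv`
is at most `sqrt(h_out * w_out * ∑ i ∑ j ∑ k ∑ t |K i j k t|²)`. -/
theorem conv_opNorm_l2_le (d_in d_out h_in w_in k1 k2 s1 s2 p1 p2 : ℕ)
    (hdin : 0 < d_in) (hdout : 0 < d_out) (hhin : 0 < h_in) (hwin : 0 < w_in)
    (hk1pos : 0 < k1) (hk2pos : 0 < k2) (hs1 : 0 < s1) (hs2 : 0 < s2)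
    (hk1 : k1 ≤ h_in + 2*p1) (hk2 : k2 ≤ w_in + 2*p2)
    (K : Fin d_out → Fin d_in → Fin k1 → Fin k2 → ℝ)
    -- Assumption 1
    (c1 c2 : ℕ) (hc1pos : 0 < c1) (hc2pos : 0 < c2)
    (hc1 : p1 ≤ c1 * s1) (hc2 : p2 ≤ c2 * s2)
    (hc1min : ∀ m : ℕ, 0 < m → p1 ≤ m * s1 → c1 ≤ m)
    (hc2min : ∀ m : ℕ, 0 < m → p2 ≤ m * s2 → c2 ≤ m)
    (ha1 : k1 + c1 * s1 ≤ h_in + p1) (ha2 : k2 + c2 * s2 ≤ w_in + p2) :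
    ‖convCLM2 d_in d_out h_in w_in k1 k2 s1 s2 p1 p2 K‖ ≤
      Real.sqrt ((((h_in + 2*p1 - k1)/s1 + 1) * ((w_in + 2*p2 - k2)/s2 + 1) : ℕ) *
        ∑ i : Fin d_out, ∑ j : Fin d_in, ∑ k : Fin k1, ∑ t : Fin k2, |K i j k t| ^ 2) := by
  refine ContinuousLinearMap.opNorm_le_bound _ (Real.sqrt_nonneg _) fun X => ?_
  have hr : ∀ r : Fin ((h_in + 2*p1 - k1)/s1 + 1), (r : ℕ) * s1 + k1 ≤ h_in + 2*p1 := by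
    intro r
    have h1 : (r : ℕ) ≤ (h_in + 2*p1 - k1)/s1 := Nat.lt_succ_iff.mp r.is_lt
    have h2 : (r : ℕ) * s1 ≤ ((h_in + 2*p1 - k1)/s1) * s1 := Nat.mul_le_mul_right _ h1
    have h3 := Nat.div_mul_le_self (h_in + 2*p1 - k1) s1
    omega
  have hcg : ∀ c : Fin ((w_in + 2*p2 - k2)/s2 + 1), (c : ℕ) * s2 + k2 ≤ w_in + 2*p2 := by
    intro c
    have h1 : (c : ℕ) ≤ (w_in + 2*p2 - k2)/s2 := Nat.lt_succ_iff.mp c.is_lt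
    have h2 : (c : ℕ) * s2 ≤ ((w_in + 2*p2 - k2)/s2) * s2 := Nat.mul_le_mul_right _ h1
    have h3 := Nat.div_mul_le_self (w_in + 2*p2 - k2) s2
    omega
  set S : ℝ := ∑ q : Fin d_in × Fin h_in × Fin w_in, (X q)^2 with hSdef
  have hS0 : 0 ≤ S := Finset.sum_nonneg fun _ _ => sq_nonneg _
  have hXn : ‖X‖ = Real.sqrt S := by
    rw [EuclideanSpace.norm_eq]
    congr 1
    exact Finset.sum_congr rfl fun q _ => by rw [Real.norm_eq_abs, sq_abs]
  have hYn : ‖convCLM2 d_in d_out h_in w_in k1 k2 s1 s2 p1 p2 K X‖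
      = Real.sqrt (∑ irc, (convMap d_in d_out h_in w_in k1 k2 s1 s2 p1 p2 K X irc)^2) := by
    rw [EuclideanSpace.norm_eq]
    congr 1
    refine Finset.sum_congr rfl fun q _ => ?_
    rw [Real.norm_eq_abs, sq_abs]
    rfl
  rw [hYn, hXn, ← Real.sqrt_mul (by positivity)]
  apply Real.sqrt_le_sqrt
  have key : ∀ (i : Fin d_out) (r : Fin ((h_in + 2*p1 - k1)/s1 + 1))
      (c : Fin ((w_in + 2*p2 - k2)/s2 + 1)),
      (convMap d_in d_out h_in w_in k1 k2 s1 s2 p1 p2 K X (i, r, c))^2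
        ≤ (∑ j, ∑ k, ∑ t, K i j k t ^ 2) * S := by
    intro i r c
    have cs := Finset.sum_mul_sq_le_sq_mul_sq Finset.univ
      (fun p : Fin d_in × Fin k1 × Fin k2 => K i p.1 p.2.1 p.2.2)
      (fun p : Fin d_in × Fin k1 × Fin k2 =>
        padX d_in h_in w_in p1 p2 X p.1 ((r:ℕ)*s1 + p.2.1) ((c:ℕ)*s2 + p.2.2))
    have e1 : convMap d_in d_out h_in w_in k1 k2 s1 s2 p1 p2 K X (i, r, c)
        = ∑ p : Fin d_in × Fin k1 × Fin k2, K i p.1 p.2.1 p.2.2 *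
            padX d_in h_in w_in p1 p2 X p.1 ((r:ℕ)*s1 + p.2.1) ((c:ℕ)*s2 + p.2.2) := by
      simp [convMap, Fintype.sum_prod_type]
    rw [e1]
    refine cs.trans ?_
    have e2 : (∑ p : Fin d_in × Fin k1 × Fin k2, K i p.1 p.2.1 p.2.2 ^ 2)
        = ∑ j, ∑ k, ∑ t, K i j k t ^ 2 := by
      simp [Fintype.sum_prod_type]
    rw [e2]
    refine mul_le_mul_of_nonneg_left ?_
      (Finset.sum_nonneg fun _ _ => Finset.sum_nonneg fun _ _ =>
        Finset.sum_nonneg fun _ _ => sq_nonneg _)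
    calc ∑ p : Fin d_in × Fin k1 × Fin k2,
          padX d_in h_in w_in p1 p2 X p.1 ((r:ℕ)*s1 + p.2.1) ((c:ℕ)*s2 + p.2.2) ^ 2
        = ∑ j : Fin d_in, ∑ p : Fin k1 × Fin k2,
            padX d_in h_in w_in p1 p2 X j ((r:ℕ)*s1 + p.1) ((c:ℕ)*s2 + p.2) ^ 2 := by
          rw [Fintype.sum_prod_type]
      _ ≤ ∑ j : Fin d_in, ∑ q : Fin h_in × Fin w_in, X (j, q.1, q.2) ^ 2 :=
          Finset.sum_le_sum fun j _ =>
            window_sq_le d_in h_in w_in k1 k2 p1 p2 X j ((r:ℕ)*s1) ((c:ℕ)*s2) (hr r) (hcg c)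
      _ = S := by rw [hSdef, Fintype.sum_prod_type]
  calc ∑ irc, (convMap d_in d_out h_in w_in k1 k2 s1 s2 p1 p2 K X irc)^2
      = ∑ i : Fin d_out, ∑ r : Fin ((h_in + 2*p1 - k1)/s1 + 1),
          ∑ c : Fin ((w_in + 2*p2 - k2)/s2 + 1),
          (convMap d_in d_out h_in w_in k1 k2 s1 s2 p1 p2 K X (i, r, c))^2 := by
        rw [Fintype.sum_prod_type]
        exact Finset.sum_congr rfl fun i _ => by rw [Fintype.sum_prod_type]
    _ ≤ ∑ i : Fin d_out, ∑ r : Fin ((h_in + 2*p1 - k1)/s1 + 1),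
          ∑ c : Fin ((w_in + 2*p2 - k2)/s2 + 1),
          (∑ j, ∑ k, ∑ t, K i j k t ^ 2) * S :=
        Finset.sum_le_sum fun i _ => Finset.sum_le_sum fun r _ =>
          Finset.sum_le_sum fun c _ => key i r c
    _ = (((h_in + 2*p1 - k1)/s1 + 1) * ((w_in + 2*p2 - k2)/s2 + 1) : ℕ) *
          (∑ i : Fin d_out, ∑ j : Fin d_in, ∑ k : Fin k1, ∑ t : Fin k2, |K i j k t| ^ 2) * S := by
        simp only [Finset.sum_const, Finset.card_univ, Fintype.card_fin, nsmul_eq_mul, sq_abs,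
          ← Finset.sum_mul, ← Finset.mul_sum]
        push_cast
        ring

end
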